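/- arXiv:2405.13836 — 3 statements merged into one kernel-verified Lean document; each statement's English description precedes it below -/
import Mathlib

section
/- If X is a compact ANR space, then tc(X) = tc_g(X). If, in addition, X is connected, then cat(X) = cat_g(X). -/
universe u v w

/-- A metrizable space `Y` is an ANR if for every metrizable space `W`, every closed
subset `C ⊆ W` and every continuous map `g : C → Y`, there exist an open set `U` with
`C ⊆ U ⊆ W` and a continuous map `G : U → Y` extending `g`. -/
def IsANR (Y : Type v) [TopologicalSpace Y] : Prop :=
  TopologicalSpace.MetrizableSpace Y ∧
  ∀ (W : Type w) [TopologicalSpace W] [TopologicalSpace.MetrizableSpace W]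
    (C : Set W), IsClosed C → ∀ g : C(C, Y),
    ∃ U : Set W, IsOpen U ∧ C ⊆ U ∧
      ∃ G : C(U, Y), ∀ (w : W) (hC : w ∈ C) (hU : w ∈ U), G ⟨w, hU⟩ = g ⟨w, hC⟩

open scoped ENat

/-- A subset `A ⊆ X × X` admits a continuous local section of the path fibration
`π_X : X^I → X × X`, `α ↦ (α(0), α(1))`. -/
def HasLocalSectionPi {X : Type u} [TopologicalSpace X] (A : Set (X × X)) : Prop :=
  ∃ s : C(A, C(unitInterval, X)), ∀ a : A, ((s a) 0, (s a) 1) = (a : X × X)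

/-- Topological complexity of `X`: least `n` (or `∞`) such that `X × X` is covered by
`n+1` open subsets each admitting a local section of `π_X`. -/
noncomputable def tc (X : Type u) [TopologicalSpace X] : ℕ∞ :=
  sInf {m : ℕ∞ | ∃ n : ℕ, m = n ∧ ∃ A : Fin (n + 1) → Set (X × X),
    (⋃ i, A i) = Set.univ ∧ ∀ i, IsOpen (A i) ∧ HasLocalSectionPi (A i)}

/-- Generalized topological complexity of `X`: least `n` (or `∞`) such that `X × X` is
covered by `n+1` arbitrary subsets each admitting a local section of `π_X`. -/
noncomputable def tcg (X : Type u) [TopologicalSpace X] : ℕ∞ :=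
  sInf {m : ℕ∞ | ∃ n : ℕ, m = n ∧ ∃ A : Fin (n + 1) → Set (X × X),
    (⋃ i, A i) = Set.univ ∧ ∀ i, HasLocalSectionPi (A i)}

/-- LS category of `X` (`cat(X) = cat(id_X)`): least `n` (or `∞`) such that `X` is
covered by `n+1` open subsets on which the identity is nullhomotopic. -/
noncomputable def catSpace (X : Type u) [TopologicalSpace X] : ℕ∞ :=
  sInf {m : ℕ∞ | ∃ n : ℕ, m = n ∧ ∃ A : Fin (n + 1) → Set X,
    (⋃ i, A i) = Set.univ ∧
    ∀ i, IsOpen (A i) ∧ ((ContinuousMap.id X).restrict (A i)).Nullhomotopic}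

/-- Generalized LS category of `X`. -/
noncomputable def catgSpace (X : Type u) [TopologicalSpace X] : ℕ∞ :=
  sInf {m : ℕ∞ | ∃ n : ℕ, m = n ∧ ∃ A : Fin (n + 1) → Set X,
    (⋃ i, A i) = Set.univ ∧ ∀ i, ((ContinuousMap.id X).restrict (A i)).Nullhomotopic}

/-! Every `A ⊆ X × X` over which `π_X` has a section has an open neighbourhood with one, which
gives `tc = tc_g`; and `cat = cat_g` because a nullhomotopy of `A ↪ X` to `y₀` is a section over
`A × {y₀}`. Since `C(I, X)` is complete, a section over `A` extends to a Gδ set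
`G = ⋂ n, {f n > 0}` (Kuratowski). Via `z ↦ (z, (f n z)⁻¹)`, `G` is a closed subset of
`(X × X) × ℝ^ℕ`, and the ANR property extends the section to a neighbourhood of it. Pulling back
along a continuous choice of the `ℝ^ℕ`-coordinates gives paths over an open `U ⊇ G` whose
endpoints are only near the prescribed ones; paths over a neighbourhood of the diagonal, again
from the ANR property, correct the endpoints.
-/

open Topology TopologicalSpace Metric Set Filter
open scoped unitInterval

theorem isOpen_setOf_forall_prodMk_mem {W K : Type*} [TopologicalSpace W] [TopologicalSpace K]
    [CompactSpace K] {Ω : Set (W × K)} (hΩ : IsOpen Ω) : IsOpen {x | ∀ t, (x, t) ∈ Ω} := by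
  convert (isClosedMap_fst_of_compactSpace _ hΩ.isClosed_compl).isOpen_compl using 1
  ext x
  simp

def ContinuousMap.curryOfForallMem {W K Y : Type*} [TopologicalSpace W] [TopologicalSpace K]
    [TopologicalSpace Y] {Ω : Set (W × K)} (G : C(Ω, Y)) : C({x | ∀ t, (x, t) ∈ Ω}, C(K, Y)) :=
  (G.comp ⟨fun p => ⟨(p.1, p.2), p.1.2 p.2⟩, by fun_prop⟩).curry

@[simp]
theorem ContinuousMap.curryOfForallMem_apply {W K Y : Type*} [TopologicalSpace W]
    [TopologicalSpace K] [TopologicalSpace Y] {Ω : Set (W × K)} (G : C(Ω, Y))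
    (x : {x | ∀ t, (x, t) ∈ Ω}) (t : K) : G.curryOfForallMem x t = G ⟨(x, t), x.2 t⟩ :=
  rfl

theorem IsANR.exists_extension {X : Type v} [TopologicalSpace X] (hX : IsANR.{v, w} X)
    {W : Type*} [TopologicalSpace W] [T3Space W] [SecondCountableTopology W] {C : Set W}
    (hC : IsClosed C) (g : C(C, X)) :
    ∃ U : Set W, IsOpen U ∧ ∃ hCU : C ⊆ U, ∃ G : C(U, X), ∀ x, G (inclusion hCU x) = g x := by
  -- move `W` into the universe `w` by embedding it into `ℓ^∞`
  obtain ⟨φ, hφ⟩ := exists_embedding_l_infty W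
  let e : W ≃ₜ range (ULift.up.{w} ∘ φ) :=
    (Homeomorph.ulift.symm.isEmbedding.comp hφ).toHomeomorph
  obtain ⟨U, hU, hCU, G, hG⟩ := hX.2 _ (e '' C) (e.isClosedMap C hC) (g.comp (e.image C).symm)
  refine ⟨e ⁻¹' U, hU.preimage e.continuous, fun x hx => hCU (mem_image_of_mem e hx),
    G.comp ⟨fun x => ⟨e x, x.2⟩, by fun_prop⟩, fun x => ?_⟩
  have := hG (e x) (mem_image_of_mem e x.2) (hCU (mem_image_of_mem e x.2))
  simp only [ContinuousMap.comp_apply, ContinuousMap.coe_mk] at this ⊢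
  rw [this]
  congr 1
  exact (e.image C).symm_apply_apply x

theorem IsANR.exists_extension_continuousMap {X : Type v} [TopologicalSpace X]
    (hX : IsANR.{v, w} X) (K : Type*) [TopologicalSpace K] [CompactSpace K] [T3Space K]
    [SecondCountableTopology K] {W : Type*} [TopologicalSpace W] [T3Space W]
    [SecondCountableTopology W] {C : Set W} (hC : IsClosed C) (g : C(C, C(K, X))) :
    ∃ U : Set W, IsOpen U ∧ ∃ hCU : C ⊆ U, ∃ G : C(U, C(K, X)),
      ∀ x, G (inclusion hCU x) = g x := by
  obtain ⟨Ω, hΩ, hCΩ, G, hG⟩ := hX.exists_extension (hC.prod isClosed_univ)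
    (g.uncurry.comp ⟨fun p => (⟨p.1.1, p.2.1⟩, p.1.2), by fun_prop⟩)
  refine ⟨_, isOpen_setOf_forall_prodMk_mem hΩ, fun x hx t => hCΩ ⟨hx, trivial⟩,
    G.curryOfForallMem, fun x => ?_⟩
  ext t
  exact hG ⟨(x, t), x.2, trivial⟩

theorem IsANR.exists_diagonal_subset_hasLocalSectionPi {X : Type u} [TopologicalSpace X]
    [T3Space X] [SecondCountableTopology X] (hX : IsANR.{u, w} X) :
    ∃ V : Set (X × X), IsOpen V ∧ diagonal X ⊆ V ∧ HasLocalSectionPi V := by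
  set C : Set ((X × X) × I) := diagonal X ×ˢ univ ∪ univ ×ˢ {0, 1}
  have hC : IsClosed C := (isClosed_diagonal.prod isClosed_univ).union
    (isClosed_univ.prod (toFinite _).isClosed)
  have hmid : ∀ p ∈ C, (p.2 : ℝ) = 1 / 2 → p.1.1 = p.1.2 := by
    rintro ⟨_, t⟩ (hp | ⟨-, rfl | rfl⟩) h
    · exact hp.1
    all_goals norm_num at h
  let g : C(C, X) := ⟨fun p => if (p.1.2 : ℝ) ≤ 1 / 2 then p.1.1.1 else p.1.1.2,
    continuous_subtype_val.fst.fst.if_le continuous_subtype_val.fst.snd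
      (continuous_subtype_val.comp continuous_subtype_val.snd) continuous_const
      fun p => hmid p.1 p.2⟩
  obtain ⟨Ω, hΩ, hCΩ, G, hG⟩ := hX.exists_extension hC g
  refine ⟨_, isOpen_setOf_forall_prodMk_mem hΩ, fun p hp t => hCΩ (.inl ⟨hp, trivial⟩),
    G.curryOfForallMem, fun p => Prod.ext ?_ ?_⟩
  · simpa [g] using hG ⟨(p, 0), .inr ⟨trivial, .inl rfl⟩⟩
  · have := hG ⟨(p, 1), .inr ⟨trivial, .inr rfl⟩⟩
    norm_num [g] at this
    exact this

theorem HasLocalSectionPi.of_endpoints_mem {X : Type u} [TopologicalSpace X]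
    {V U : Set (X × X)} (hV : HasLocalSectionPi V) (m : C(U, C(I, X)))
    (h₀ : ∀ y : U, ((y : X × X).1, m y 0) ∈ V) (h₁ : ∀ y : U, (m y 1, (y : X × X).2) ∈ V) :
    HasLocalSectionPi U := by
  obtain ⟨s, hs⟩ := hV
  have hs₀ (p : V) : s p 0 = (p : X × X).1 := congrArg Prod.fst (hs p)
  have hs₁ (p : V) : s p 1 = (p : X × X).2 := congrArg Prod.snd (hs p)
  let γ₁ (y : U) : Path (y : X × X).1 (m y 0) := ⟨s ⟨_, h₀ y⟩, hs₀ _, hs₁ _⟩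
  let γ₂ (y : U) : Path (m y 0) (m y 1) := ⟨m y, rfl, rfl⟩
  let γ₃ (y : U) : Path (m y 1) (y : X × X).2 := ⟨s ⟨_, h₁ y⟩, hs₀ _, hs₁ _⟩
  have hγ₁ : Continuous ↿γ₁ := by
    change Continuous fun p : U × I => s ⟨_, h₀ p.1⟩ p.2
    fun_prop
  have hγ₂ : Continuous ↿γ₂ := by
    change Continuous fun p : U × I => m p.1 p.2
    fun_prop
  have hγ₃ : Continuous ↿γ₃ := by
    change Continuous fun p : U × I => s ⟨_, h₁ p.1⟩ p.2
    fun_prop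
  let γ (y : U) := (γ₁ y).trans ((γ₂ y).trans (γ₃ y))
  have hγ : Continuous ↿γ := Path.trans_continuous_family γ₁ hγ₁ _
    (Path.trans_continuous_family γ₂ hγ₂ γ₃ hγ₃)
  exact ⟨ContinuousMap.curry ⟨↿γ, hγ⟩, fun y => Prod.ext (γ y).source (γ y).target⟩

theorem ContinuousMap.exists_isGδ_extension {Z P : Type*} [TopologicalSpace Z]
    [PerfectlyNormalSpace Z] [MetricSpace P] [CompleteSpace P] {A : Set Z} (s : C(A, P)) :
    ∃ G : Set Z, IsGδ G ∧ ∃ hAG : A ⊆ G, G ⊆ closure A ∧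
      ∃ S : C(G, P), ∀ a, S (Set.inclusion hAG a) = s a := by
  -- `W ε` is the set of points near which `s` oscillates by less than `ε`
  set W : ℝ → Set Z := fun ε => ⋃₀ {O | IsOpen O ∧
    ∀ a a' : A, (a : Z) ∈ O → (a' : Z) ∈ O → dist (s a) (s a') < ε}
  have hAW (ε : ℝ) (hε : 0 < ε) : A ⊆ W ε := by
    intro a ha
    obtain ⟨O, hO, hOs⟩ := isOpen_induced_iff.1
      (isOpen_ball.preimage s.continuous : IsOpen (s ⁻¹' ball (s ⟨a, ha⟩) (ε / 2)))
    have hmem (a' : A) : (a' : Z) ∈ O ↔ dist (s a') (s ⟨a, ha⟩) < ε / 2 :=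
      Set.ext_iff.1 hOs a'
    refine ⟨O, ⟨hO, fun a₁ a₂ h₁ h₂ => ?_⟩, (hmem ⟨a, ha⟩).2 (by simpa using half_pos hε)⟩
    linarith [dist_triangle_right (s a₁) (s a₂) (s ⟨a, ha⟩), (hmem a₁).1 h₁, (hmem a₂).1 h₂]
  set G := closure A ∩ ⋂ n : ℕ, W (1 / (n + 1))
  have hAG : A ⊆ G := fun a ha =>
    ⟨subset_closure ha, mem_iInter.2 fun n => hAW _ Nat.one_div_pos_of_nat ha⟩
  have hGA : G ⊆ closure A := inter_subset_left
  have hi : IsDenseInducing (inclusion hAG) :=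
    ⟨(IsEmbedding.inclusion hAG).isInducing, (denseRange_inclusion_iff hAG).2 hGA⟩
  have hcauchy (b : G) : Cauchy (map s (comap (inclusion hAG) (𝓝 b))) := by
    have := hi.comap_nhds_neBot b
    refine Metric.cauchy_iff.2 ⟨inferInstance, fun ε hε => ?_⟩
    obtain ⟨n, hn⟩ := exists_nat_one_div_lt hε
    obtain ⟨O, ⟨hO, hOs⟩, hbO⟩ := mem_iInter.1 b.2.2 n
    refine ⟨s '' (inclusion hAG ⁻¹' (Subtype.val ⁻¹' O)), image_mem_map
      (preimage_mem_comap ((hO.preimage continuous_subtype_val).mem_nhds hbO)), ?_⟩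
    rintro _ ⟨a₁, h₁, rfl⟩ _ ⟨a₂, h₂, rfl⟩
    exact (hOs a₁ a₂ h₁ h₂).trans hn
  have hlim (b : G) : ∃ c, Tendsto s (comap (inclusion hAG) (𝓝 b)) (𝓝 c) :=
    CompleteSpace.complete (hcauchy b)
  exact ⟨G, isClosed_closure.isGδ.inter (.iInter_of_isOpen fun n => isOpen_sUnion fun O hO => hO.1),
    hAG, hGA, ⟨hi.extend s, hi.continuous_extend hlim⟩, hi.extend_eq s.continuous⟩

theorem HasLocalSectionPi.exists_isGδ_superset {X : Type*} [TopologicalSpace X]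
    [IsCompletelyMetrizableSpace X] {A : Set (X × X)} (hA : HasLocalSectionPi A) :
    ∃ G, IsGδ G ∧ A ⊆ G ∧ HasLocalSectionPi G := by
  let := upgradeIsCompletelyMetrizable X
  obtain ⟨s, hs⟩ := hA
  obtain ⟨G, hG, hAG, hGA, S, hS⟩ := s.exists_isGδ_extension
  refine ⟨G, hG, hAG, S, congrFun (((denseRange_inclusion_iff hAG).2 hGA).equalizer
    (g := fun b => (S b 0, S b 1)) (by fun_prop) continuous_subtype_val (funext fun a => ?_))⟩
  simp [hS, hs]

theorem ContinuousAt.exists_finset_eventually_prodMk_mem {Z ι : Type*} {Y : ι → Type*}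
    [TopologicalSpace Z] [∀ i, TopologicalSpace (Y i)] {φ : Z → ∀ i, Y i} {b : Z}
    (hφ : ContinuousAt φ b) {Ω : Set (Z × ∀ i, Y i)} (hΩ : Ω ∈ 𝓝 (b, φ b)) :
    ∃ N : Finset ι, ∀ᶠ x in 𝓝 b, ∀ r, (∀ i ∈ N, r i = φ x i) → (x, r) ∈ Ω := by
  rw [nhds_prod_eq, nhds_pi] at hΩ
  obtain ⟨t₁, ht₁, t₂, ht₂, hΩ⟩ := mem_prod_iff.1 hΩ
  obtain ⟨N, t, ht, hNt⟩ := mem_pi'.1 ht₂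
  have hφt : ∀ᶠ x in 𝓝 b, ∀ i ∈ N, φ x i ∈ t i :=
    N.eventually_all.2 fun i _ => (continuousAt_pi.1 hφ i) (ht i)
  refine ⟨N, ?_⟩
  filter_upwards [ht₁, hφt] with x hx₁ hx r hr
  exact hΩ ⟨hx₁, hNt fun i hi => show r i ∈ t i from hr i hi ▸ hx i hi⟩

theorem exists_continuous_prodMk_inv_mem {Z : Type*} [TopologicalSpace Z]
    [PseudoMetrizableSpace Z] (f : ℕ → C(Z, ℝ)) {Ω : Set (Z × (ℕ → ℝ))} (hΩ : IsOpen Ω)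
    (hB : ∀ b, (∀ n, 0 < f n b) → (b, fun n => (f n b)⁻¹) ∈ Ω) :
    ∃ U, IsOpen U ∧ {b | ∀ n, 0 < f n b} ⊆ U ∧
      ∃ lam : C(U, ℕ → ℝ), ∀ y : U, ((y : Z), lam y) ∈ Ω := by
  let := pseudoMetrizableSpacePseudoMetric Z
  set B := {b | ∀ n, 0 < f n b}
  -- near `b ∈ B`, membership in `Ω` only depends on finitely many coordinates, which are bounded
  have hloc (b : Z) (hb : b ∈ B) : ∃ N : Finset ℕ, ∃ c : ℝ, ∀ᶠ x in 𝓝 b,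
      (∀ n ∈ N, 0 < f n x ∧ (f n x)⁻¹ ≤ c) ∧
        ∀ r, (∀ n ∈ N, r n = (f n x)⁻¹) → (x, r) ∈ Ω := by
    have hcont (n : ℕ) : ContinuousAt (fun x => (f n x)⁻¹) b :=
      (f n).continuous.continuousAt.inv₀ (hb n).ne'
    obtain ⟨N, hN⟩ := (continuousAt_pi.2 hcont).exists_finset_eventually_prodMk_mem
      (hΩ.mem_nhds (hB b hb))
    refine ⟨N, ∑ n ∈ N, ((f n b)⁻¹ + 1), .and ?_ hN⟩
    refine N.eventually_all.2 fun n hn => ?_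
    filter_upwards [(f n).continuous.continuousAt.eventually (lt_mem_nhds (hb n)),
      (hcont n).eventually (gt_mem_nhds (lt_add_one (f n b)⁻¹))] with x hx hx'
    refine ⟨hx, hx'.le.trans (Finset.single_le_sum (f := fun n => (f n b)⁻¹ + 1)
      (fun i _ => by have := hb i; positivity) hn)⟩
  choose! N c hNc using hloc
  set P : Z → Z → Prop := fun b x => (∀ n ∈ N b, 0 < f n x ∧ (f n x)⁻¹ ≤ c b) ∧
    ∀ r, (∀ n ∈ N b, r n = (f n x)⁻¹) → (x, r) ∈ Ω
  set U := ⋃ b ∈ B, interior {x | P b x}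
  have hBU : B ⊆ U := fun b hb => mem_biUnion hb (mem_interior_iff_mem_nhds.2 (hNc b hb))
  obtain ⟨ψ, hψ⟩ := exists_continuous_forall_mem_convex_of_local_const
    (t := fun y : U => {d | 0 < d ∧ ∃ b ∈ B, (y : Z) ∈ interior {x | P b x} ∧ c b ≤ d})
    (fun y => convex_iff_ordConnected.2 ⟨fun d₁ ⟨hd₁, b, hb, hy, hbd⟩ _ _ d hd =>
      ⟨hd₁.trans_le hd.1, b, hb, hy, hbd.trans hd.1⟩⟩)
    (fun y => by
      obtain ⟨b, hb, hy⟩ := mem_iUnion₂.1 y.2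
      refine ⟨max (c b) 1, ?_⟩
      filter_upwards [(isOpen_interior.preimage continuous_subtype_val).mem_nhds hy] with z hz
      exact ⟨one_pos.trans_le (le_max_right _ _), b, hb, hz, le_max_left _ _⟩)
  -- truncating `(f n y)⁻¹` at `ψ y` keeps the coordinates that matter near each `b` unchanged
  have hψinv (n : ℕ) (y : U) : 0 < max (f n y) (ψ y)⁻¹ :=
    lt_max_of_lt_right (inv_pos.2 (hψ y).1)
  refine ⟨U, isOpen_biUnion fun _ _ => isOpen_interior, hBU,
    ⟨fun y n => (max (f n y) (ψ y)⁻¹)⁻¹, continuous_pi fun n =>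
      (((f n).continuous.comp continuous_subtype_val).max
        (ψ.continuous.inv₀ fun y => (hψ y).1.ne')).inv₀ fun y => (hψinv n y).ne'⟩, fun y => ?_⟩
  obtain ⟨-, b, -, hy, hcb⟩ := hψ y
  obtain ⟨hbound, hΩ⟩ := interior_subset hy
  refine hΩ _ fun n hn => ?_
  obtain ⟨hpos, hle⟩ := hbound n hn
  simp only [ContinuousMap.coe_mk]
  rw [max_eq_left ((inv_le_comm₀ hpos (hψ y).1).1 (hle.trans hcb))]

theorem IsANR.exists_continuousMap_prodMk_mem {X : Type v} [TopologicalSpace X]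
    (hX : IsANR.{v, w} X) (K : Type*) [TopologicalSpace K] [CompactSpace K] [T3Space K]
    [SecondCountableTopology K] {Z : Type*} [TopologicalSpace Z] [MetrizableSpace Z]
    [SecondCountableTopology Z] {G : Set Z} (hG : IsGδ G) (S : C(G, C(K, X)))
    {Γ : Set (Z × C(K, X))} (hΓ : IsOpen Γ) (hSΓ : ∀ b : G, ((b : Z), S b) ∈ Γ) :
    ∃ U, IsOpen U ∧ G ⊆ U ∧ ∃ T : C(U, C(K, X)), ∀ y : U, ((y : Z), T y) ∈ Γ := by
  -- write `G = {z | ∀ n, 0 < f n z}`; then `z ↦ (z, (f n z)⁻¹)` maps `G` onto a closed set `E`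
  obtain ⟨O, hO, rfl⟩ := isGδ_iff_eq_iInter_nat.1 hG
  choose f hf hf01 using fun n => perfectlyNormalSpace_iff_forall_isClosed_preimage_zero.1
    inferInstance _ (hO n).isClosed_compl
  have hGf (z : Z) : z ∈ ⋂ n, O n ↔ ∀ n, 0 < f n z := by
    refine mem_iInter.trans (forall_congr' fun n => ?_)
    rw [← not_iff_not, ← mem_compl_iff, hf n, mem_preimage, mem_singleton_iff, not_lt]
    exact ⟨le_of_eq, fun h => h.antisymm (hf01 n z).1⟩
  set E : Set (Z × (ℕ → ℝ)) := {m | ∀ n, m.2 n * f n m.1 = 1}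
  have hE : IsClosed E := by
    simp only [E, ofPred_forall]
    exact isClosed_iInter fun n => isClosed_eq (by fun_prop) continuous_const
  have hEG (m) (hm : m ∈ E) : m.1 ∈ ⋂ n, O n :=
    (hGf _).2 fun n => lt_of_le_of_ne (hf01 n m.1).1 fun h => by simpa [← h] using hm n
  obtain ⟨Ω₀, hΩ₀, hEΩ₀, T₀, hT₀⟩ := hX.exists_extension_continuousMap K hE
    (S.comp ⟨fun m => ⟨m.1.1, hEG _ m.2⟩, by fun_prop⟩)
  set Ω := {m | ∃ h : m ∈ Ω₀, (m.1, T₀ ⟨m, h⟩) ∈ Γ}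
  have hΩ : IsOpen Ω := by
    convert hΩ₀.isOpenMap_subtype_val _ (hΓ.preimage (by fun_prop :
      Continuous fun m : Ω₀ => ((m : Z × (ℕ → ℝ)).1, T₀ m))) using 1
    ext m
    simp [Ω]
  obtain ⟨U, hU, hGU, lam, hlam⟩ := exists_continuous_prodMk_inv_mem f hΩ fun b hb => by
    have hm : (b, fun n => (f n b)⁻¹) ∈ E := fun n => inv_mul_cancel₀ (hb n).ne'
    refine ⟨hEΩ₀ hm, ?_⟩
    convert hSΓ ⟨b, (hGf b).2 hb⟩ using 2
    exact hT₀ ⟨_, hm⟩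
  exact ⟨U, hU, fun z hz => hGU ((hGf z).1 hz),
    ⟨fun y => T₀ ⟨(y, lam y), (hlam y).fst⟩, by fun_prop⟩, fun y => (hlam y).snd⟩

theorem IsANR.exists_isOpen_superset_hasLocalSectionPi {X : Type u} [TopologicalSpace X]
    [PolishSpace X] (hX : IsANR.{u, w} X) {A : Set (X × X)} (hA : HasLocalSectionPi A) :
    ∃ U, IsOpen U ∧ A ⊆ U ∧ HasLocalSectionPi U := by
  obtain ⟨V, hV, hΔV, hVs⟩ := hX.exists_diagonal_subset_hasLocalSectionPi
  obtain ⟨G, hG, hAG, S, hS⟩ := hA.exists_isGδ_superset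
  obtain ⟨U, hU, hGU, T, hT⟩ := hX.exists_continuousMap_prodMk_mem I hG S
    (Γ := {q | (q.1.1, q.2 0) ∈ V ∧ (q.2 1, q.1.2) ∈ V})
    ((hV.preimage (by fun_prop)).inter (hV.preimage (by fun_prop)))
    fun b => ⟨hΔV (congrArg Prod.fst (hS b)).symm, hΔV (congrArg Prod.snd (hS b))⟩
  exact ⟨U, hU, hAG.trans hGU, hVs.of_endpoints_mem T (fun y => (hT y).1) fun y => (hT y).2⟩

theorem HasLocalSectionPi.prod_singleton {X : Type u} [TopologicalSpace X] {A : Set X} {y₀ : X}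
    (H : ((ContinuousMap.id X).restrict A).Homotopy (.const A y₀)) :
    HasLocalSectionPi (A ×ˢ {y₀}) :=
  ⟨.curry ⟨fun q : (A ×ˢ {y₀} : Set (X × X)) × I => H (q.2, ⟨q.1.1.1, q.1.2.1⟩), by fun_prop⟩,
    fun p => Prod.ext (H.apply_zero _) ((H.apply_one _).trans p.2.2.symm)⟩

theorem HasLocalSectionPi.nullhomotopic_restrict {X : Type u} [TopologicalSpace X]
    {U : Set (X × X)} (hU : HasLocalSectionPi U) (y₀ : X) :
    ((ContinuousMap.id X).restrict {x | (x, y₀) ∈ U}).Nullhomotopic := by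
  obtain ⟨s, hs⟩ := hU
  exact ⟨y₀, ⟨⟨⟨fun q => s ⟨(q.2, y₀), q.2.2⟩ q.1, by fun_prop⟩,
    fun x => congrArg Prod.fst (hs _), fun x => congrArg Prod.snd (hs _)⟩⟩⟩

theorem IsANR.exists_isOpen_superset_nullhomotopic {X : Type u} [TopologicalSpace X]
    [PolishSpace X] (hX : IsANR.{u, w} X) {A : Set X}
    (hA : ((ContinuousMap.id X).restrict A).Nullhomotopic) :
    ∃ U, IsOpen U ∧ A ⊆ U ∧ ((ContinuousMap.id X).restrict U).Nullhomotopic := by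
  obtain ⟨y₀, ⟨H⟩⟩ := hA
  obtain ⟨U, hU, hAU, hUs⟩ :=
    hX.exists_isOpen_superset_hasLocalSectionPi (HasLocalSectionPi.prod_singleton H)
  exact ⟨{x | (x, y₀) ∈ U}, hU.preimage (by fun_prop), fun x hx => hAU ⟨hx, rfl⟩,
    hUs.nullhomotopic_restrict y₀⟩

theorem setOf_isOpen_cover_eq_of_exists_isOpen_superset {Y : Type*} [TopologicalSpace Y]
    {P : Set Y → Prop} (hP : ∀ A, P A → ∃ U, IsOpen U ∧ A ⊆ U ∧ P U) :
    {m : ℕ∞ | ∃ n : ℕ, m = n ∧ ∃ A : Fin (n + 1) → Set Y,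
      (⋃ i, A i) = univ ∧ ∀ i, IsOpen (A i) ∧ P (A i)} =
    {m : ℕ∞ | ∃ n : ℕ, m = n ∧ ∃ A : Fin (n + 1) → Set Y, (⋃ i, A i) = univ ∧ ∀ i, P (A i)} := by
  ext m
  refine ⟨fun ⟨n, hm, A, hA, hAP⟩ => ⟨n, hm, A, hA, fun i => (hAP i).2⟩,
    fun ⟨n, hm, A, hA, hAP⟩ => ?_⟩
  choose U hU hAU hUP using fun i => hP _ (hAP i)
  exact ⟨n, hm, U, univ_subset_iff.1 (hA ▸ iUnion_mono hAU), fun i => ⟨hU i, hUP i⟩⟩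

/-- If `X` is a compact ANR then `tc(X) = tc_g(X)`; if moreover `X` is connected then
`cat(X) = cat_g(X)`. -/
theorem tc_eq_tcg_of_compact_ANR (X : Type u) [TopologicalSpace X] [CompactSpace X]
    (hX : IsANR X) :
    tc X = tcg X ∧ (ConnectedSpace X → catSpace X = catgSpace X) := by
  have : PolishSpace X := by
    have := hX.1
    let := metrizableSpaceMetric X
    infer_instance
  exact ⟨congrArg sInf (setOf_isOpen_cover_eq_of_exists_isOpen_superset fun _ =>
      hX.exists_isOpen_superset_hasLocalSectionPi),
    fun _ => congrArg sInf (setOf_isOpen_cover_eq_of_exists_isOpen_superset fun _ =>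
      hX.exists_isOpen_superset_nullhomotopic)⟩
end

section
/- If X and X' are homotopy equivalent topological spaces, then tc_g(X) = tc_g(X'); that is, the generalized topological complexity depends only on the homotopy type of the space. -/
universe u v

open scoped ENat

lemma hasLocalSectionPi_preimage {X : Type u} {X' : Type v} [TopologicalSpace X]
    [TopologicalSpace X'] (f : C(X, X')) (g : C(X', X))
    (H : (g.comp f).Homotopy (ContinuousMap.id X))
    {A' : Set (X' × X')} (hA' : HasLocalSectionPi A') :
    HasLocalSectionPi (Prod.map f f ⁻¹' A') := by
  obtain ⟨s, hs⟩ := hA'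
  set A : Set (X × X) := Prod.map f f ⁻¹' A' with hA
  -- the induced map A → A'
  have hi : Continuous fun a : A => (⟨(f a.1.1, f a.1.2), a.2⟩ : A') := by
    apply Continuous.subtype_mk
    exact (f.continuous.comp (continuous_fst.comp continuous_subtype_val)).prodMk
      (f.continuous.comp (continuous_snd.comp continuous_subtype_val))
  set i : C(A, A') := ⟨fun a => (⟨(f a.1.1, f a.1.2), a.2⟩ : A'), hi⟩ with hidef
  -- the path in X' associated to a point of A
  have src : ∀ a : A, (s (i a)) 0 = f a.1.1 := fun a =>
    congrArg Prod.fst (hs (i a))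
  have tgt : ∀ a : A, (s (i a)) 1 = f a.1.2 := fun a =>
    congrArg Prod.snd (hs (i a))
  set γ' : ∀ a : A, Path (f a.1.1) (f a.1.2) := fun a =>
    { toFun := s (i a)
      continuous_toFun := (s (i a)).continuous
      source' := src a
      target' := tgt a } with hγ'
  -- the path in X associated to a point of A
  set P : ∀ a : A, Path (a.1.1 : X) a.1.2 := fun a =>
    ((H.evalAt a.1.1).symm.trans ((γ' a).map g.continuous)).trans (H.evalAt a.1.2) with hP
  have h1 : Continuous ↿(fun a : A => (H.evalAt a.1.1).symm) := by
    apply Path.symm_continuous_family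
    have : (↿(fun a : A => H.evalAt a.1.1)) =
        fun p : A × unitInterval => H (p.2, p.1.1.1) := rfl
    rw [this]
    exact H.continuous.comp (by fun_prop)
  have h2 : Continuous ↿(fun a : A => (γ' a).map g.continuous) := by
    have huncurry : Continuous (Function.uncurry fun (a : A) (t : unitInterval) =>
        (s.comp i) a t) := ContinuousMap.continuous_uncurry_of_continuous (s.comp i)
    have : (↿(fun a : A => (γ' a).map g.continuous)) =
        g ∘ (Function.uncurry fun (a : A) (t : unitInterval) => (s.comp i) a t) := rfl
    rw [this]
    exact g.continuous.comp huncurry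
  have h3 : Continuous ↿(fun a : A => H.evalAt a.1.2) := by
    have : (↿(fun a : A => H.evalAt a.1.2)) =
        fun p : A × unitInterval => H (p.2, p.1.1.2) := rfl
    rw [this]
    exact H.continuous.comp (by fun_prop)
  have hPcont : Continuous ↿P := by
    apply Path.trans_continuous_family
    · exact Path.trans_continuous_family _ h1 _ h2
    · exact h3
  refine ⟨⟨fun a => (P a).toContinuousMap, ?_⟩, ?_⟩
  · apply ContinuousMap.continuous_of_continuous_uncurry
    exact hPcont
  · intro a
    simp only [ContinuousMap.coe_mk]
    have e0 : (P a).toContinuousMap 0 = a.1.1 := (P a).source'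
    have e1 : (P a).toContinuousMap 1 = a.1.2 := (P a).target'
    rw [e0, e1]

lemma tcg_le_of_maps {X : Type u} {X' : Type v} [TopologicalSpace X]
    [TopologicalSpace X'] (f : C(X, X')) (g : C(X', X))
    (H : (g.comp f).Homotopy (ContinuousMap.id X)) :
    tcg X ≤ tcg X' := by
  apply sInf_le_sInf
  rintro m ⟨n, rfl, A', hcov, hsec⟩
  refine ⟨n, rfl, fun i => Prod.map f f ⁻¹' A' i, ?_, fun i =>
    hasLocalSectionPi_preimage f g H (hsec i)⟩
  rw [← Set.preimage_iUnion, hcov, Set.preimage_univ]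

/-- The generalized topological complexity depends only on the homotopy type. -/
theorem tcg_homotopy_invariant (X : Type u) (X' : Type v) [TopologicalSpace X]
    [TopologicalSpace X'] (h : Nonempty (ContinuousMap.HomotopyEquiv X X')) :
    tcg X = tcg X' := by
  obtain ⟨e⟩ := h
  obtain ⟨Hl⟩ := e.left_inv
  obtain ⟨Hr⟩ := e.right_inv
  exact le_antisymm (tcg_le_of_maps e.toFun e.invFun Hl)
    (tcg_le_of_maps e.invFun e.toFun Hr)
end

section
/- For every path-connected topological space X, one has cat_g(X) ≤ tc_g(X) ≤ cat_g(X × X). -/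
universe u

open scoped ENat

section Aux

variable {X : Type u} [TopologicalSpace X]

/-- From a local section over `A ⊆ X × X`, the identity on `{x | (x, x₀) ∈ A}` is
nullhomotopic. -/
lemma nullhomotopic_of_hasLocalSectionPi (A : Set (X × X)) (hA : HasLocalSectionPi A)
    (x₀ : X) :
    ((ContinuousMap.id X).restrict {x | (x, x₀) ∈ A}).Nullhomotopic := by
  obtain ⟨s, hs⟩ := hA
  set B : Set X := {x | (x, x₀) ∈ A} with hB
  have hι : Continuous fun x : B => (⟨((x : X), x₀), x.2⟩ : A) :=
    Continuous.subtype_mk (continuous_subtype_val.prodMk continuous_const) _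
  refine ⟨x₀, ⟨{ toFun := fun p => s ⟨((p.2 : X), x₀), p.2.2⟩ p.1
               , continuous_toFun := ?_
               , map_zero_left := ?_
               , map_one_left := ?_ }⟩⟩
  · have h1 : Continuous fun p : unitInterval × B => (s ⟨((p.2 : X), x₀), p.2.2⟩, p.1) :=
      ((s.continuous.comp hι).comp continuous_snd).prodMk continuous_fst
    exact ContinuousEval.continuous_eval.comp h1
  · intro x
    have := hs ⟨((x : X), x₀), x.2⟩
    have h0 : (s ⟨((x : X), x₀), x.2⟩) 0 = (x : X) := congrArg Prod.fst this
    simp [h0]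
  · intro x
    have := hs ⟨((x : X), x₀), x.2⟩
    have h1 : (s ⟨((x : X), x₀), x.2⟩) 1 = x₀ := congrArg Prod.snd this
    simp [h1]

/-- If the identity on `A ⊆ X × X` is nullhomotopic and `X` is path-connected, then
`A` admits a local section of the path fibration. -/
lemma hasLocalSectionPi_of_nullhomotopic [PathConnectedSpace X] (A : Set (X × X))
    (hA : ((ContinuousMap.id (X × X)).restrict A).Nullhomotopic) :
    HasLocalSectionPi A := by
  obtain ⟨y, ⟨H⟩⟩ := hA
  set P : ∀ a : A, Path (a : X × X) y := fun a =>
    { toFun := fun t => H (t, a)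
      continuous_toFun := H.continuous.comp (continuous_id.prodMk continuous_const)
      source' := by simp
      target' := by simp } with hPdef
  have hP : Continuous ↿P := by
    show Continuous fun p : A × unitInterval => H (p.2, p.1)
    exact H.continuous.comp (continuous_snd.prodMk continuous_fst)
  set γ₁ : ∀ a : A, Path ((a : X × X)).1 y.1 := fun a => (P a).map continuous_fst with hγ₁def
  have h₁ : Continuous ↿γ₁ := by
    show Continuous fun p : A × unitInterval => (H (p.2, p.1)).1
    exact continuous_fst.comp (H.continuous.comp (continuous_snd.prodMk continuous_fst))
  set γm : ∀ _ : A, Path y.1 y.2 := fun _ => PathConnectedSpace.somePath y.1 y.2 with hγmdef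
  have hm : Continuous ↿γm := by
    show Continuous fun p : A × unitInterval => (PathConnectedSpace.somePath y.1 y.2) p.2
    exact (Path.continuous _).comp continuous_snd
  set γ₂ : ∀ a : A, Path y.2 ((a : X × X)).2 := fun a => ((P a).map continuous_snd).symm
    with hγ₂def
  have h₂ : Continuous ↿γ₂ := by
    apply Path.symm_continuous_family (fun a : A => (P a).map continuous_snd)
    show Continuous fun p : A × unitInterval => (H (p.2, p.1)).2
    exact continuous_snd.comp (H.continuous.comp (continuous_snd.prodMk continuous_fst))
  set γ : ∀ a : A, Path ((a : X × X)).1 ((a : X × X)).2 :=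
    fun a => ((γ₁ a).trans (γm a)).trans (γ₂ a) with hγdef
  have hγ : Continuous ↿γ :=
    Path.trans_continuous_family _ (Path.trans_continuous_family γ₁ h₁ γm hm) γ₂ h₂
  refine ⟨ContinuousMap.curry ⟨fun p : A × unitInterval => γ p.1 p.2, hγ⟩, ?_⟩
  intro a
  simp [ContinuousMap.curry_apply]

end Aux

/-- For every path-connected space `X`, `cat_g(X) ≤ tc_g(X) ≤ cat_g(X × X)`. -/
theorem catg_le_tcg_le_catg_prod (X : Type u) [TopologicalSpace X]
    [PathConnectedSpace X] :
    catgSpace X ≤ tcg X ∧ tcg X ≤ catgSpace (X × X) := by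
  constructor
  · apply le_sInf
    rintro m ⟨n, rfl, A, hcov, hA⟩
    apply sInf_le
    obtain ⟨x₀⟩ : Nonempty X := inferInstance
    refine ⟨n, rfl, fun i => {x | (x, x₀) ∈ A i}, ?_, fun i =>
      nullhomotopic_of_hasLocalSectionPi (A i) (hA i) x₀⟩
    ext x
    simp only [Set.mem_iUnion, Set.mem_setOf_eq, Set.mem_univ, iff_true]
    have : ((x, x₀) : X × X) ∈ ⋃ i, A i := hcov ▸ Set.mem_univ _
    simpa using this
  · apply le_sInf
    rintro m ⟨n, rfl, A, hcov, hA⟩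
    apply sInf_le
    exact ⟨n, rfl, A, hcov, fun i => hasLocalSectionPi_of_nullhomotopic (A i) (hA i)⟩
end
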